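/- arXiv:1903.04488 — 5 statements merged into one kernel-verified Lean document; each statement's English description precedes it below -/
import Mathlib

section
/- Let d ≥ 1, let x ∈ ℝ^d, let 1 ≤ k ≤ d be an integer, and let S ⊆ {1,…,d} be a set of k indices of k largest-magnitude coordinates of x, i.e. |S| = k and |x_i| ≥ |x_j| for every i ∈ S and j ∉ S. Let x_S ∈ ℝ^d denote the vector that agrees with x on S and is zero outside S. Then ‖x − x_S‖₂² ≤ (1 − k/d)·‖x‖₂². -/
/-!
Write `A` and `B` for the squared mass of `x` on `S` and off `S`, `k = #S`, and `d = k + #Sᶜ`.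
Every coordinate in `S` dominates every coordinate off `S`, so averages compare:
`k B ≤ #Sᶜ A`. Adding `#Sᶜ B` to both sides gives `d B ≤ #Sᶜ (A + B) = (d - k) ‖x‖²`.
-/

open Finset

/-- `maskedVector x S` is the vector in `ℝ^d` agreeing with `x` on the coordinates
in `S` and equal to zero elsewhere. -/
noncomputable def maskedVector {d : ℕ} (x : EuclideanSpace ℝ (Fin d)) (S : Finset (Fin d)) :
    EuclideanSpace ℝ (Fin d) :=
  (EuclideanSpace.equiv (Fin d) ℝ).symm fun i => if i ∈ S then x i else 0

section Averaging

variable {ι : Type*} [Fintype ι] [DecidableEq ι]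

theorem Finset.card_mul_sum_compl_le_card_compl_mul_sum (w : ι → ℝ) (S : Finset ι)
    (hS : ∀ i ∈ S, ∀ j ∉ S, w j ≤ w i) :
    #S * ∑ j ∈ Sᶜ, w j ≤ #Sᶜ * ∑ i ∈ S, w i :=
  calc (#S : ℝ) * ∑ j ∈ Sᶜ, w j = ∑ _i ∈ S, ∑ j ∈ Sᶜ, w j := by
        rw [sum_const, nsmul_eq_mul]
    _ ≤ ∑ i ∈ S, ∑ _j ∈ Sᶜ, w i :=
        sum_le_sum fun i hi => sum_le_sum fun j hj => hS i hi j (mem_compl.1 hj)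
    _ = #Sᶜ * ∑ i ∈ S, w i := by
        rw [sum_comm, sum_const, nsmul_eq_mul]

theorem Finset.sum_compl_le_one_sub_card_div_mul_sum (w : ι → ℝ) (S : Finset ι)
    (hS : ∀ i ∈ S, ∀ j ∉ S, w j ≤ w i) :
    ∑ j ∈ Sᶜ, w j ≤ (1 - (#S : ℝ) / Fintype.card ι) * ∑ i, w i := by
  rcases isEmpty_or_nonempty ι with hι | hι
  · simp [eq_empty_of_isEmpty]
  have hcard : (0 : ℝ) < Fintype.card ι := by exact_mod_cast Fintype.card_pos
  have hcompl : (#Sᶜ : ℝ) = Fintype.card ι - #S := by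
    rw [card_compl, Nat.cast_sub (card_le_univ S)]
  have key := card_mul_sum_compl_le_card_compl_mul_sum w S hS
  rw [← sum_add_sum_compl S, one_sub_div hcard.ne', div_mul_eq_mul_div, le_div_iff₀ hcard]
  rw [hcompl] at key
  linarith

end Averaging

section MaskedVector

variable {d : ℕ}

theorem sub_maskedVector (x : EuclideanSpace ℝ (Fin d)) (S : Finset (Fin d)) :
    x - maskedVector x S = maskedVector x Sᶜ := by
  ext i
  by_cases hi : i ∈ S <;> simp [maskedVector, hi]

theorem norm_maskedVector_sq (x : EuclideanSpace ℝ (Fin d)) (S : Finset (Fin d)) :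
    ‖maskedVector x S‖ ^ 2 = ∑ i ∈ S, x i ^ 2 := by
  rw [EuclideanSpace.norm_sq_eq, ← sum_subset (subset_univ S)]
  · refine sum_congr rfl fun i hi => ?_
    simp [maskedVector, hi]
  · intro i _ hi
    simp [maskedVector, hi]

end MaskedVector

theorem topk_contraction_general (d : ℕ)
    (x : EuclideanSpace ℝ (Fin d)) (k : ℕ)
    (S : Finset (Fin d)) (hScard : S.card = k)
    (hStop : ∀ i ∈ S, ∀ j ∉ S, |x j| ≤ |x i|) :
    ‖x - maskedVector x S‖ ^ 2 ≤ (1 - (k : ℝ) / d) * ‖x‖ ^ 2 := by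
  have hx : ‖x‖ ^ 2 = ∑ i, x i ^ 2 := by
    simp [EuclideanSpace.norm_sq_eq]
  have hsum := sum_compl_le_one_sub_card_div_mul_sum (fun i => x i ^ 2) S
    fun i hi j hj => sq_le_sq.2 (hStop i hi j hj)
  rw [Fintype.card_fin, hScard] at hsum
  rwa [sub_maskedVector, norm_maskedVector_sq, hx]

/-- The top-`k` operator is a `(k/d)`-contraction: if `S` is a set of `k`
largest-magnitude coordinates of `x ∈ ℝ^d`, and `x_S` agrees with `x` on `S`
and vanishes elsewhere, then `‖x - x_S‖₂² ≤ (1 - k/d) ‖x‖₂²`. -/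
theorem topk_contraction (d : ℕ) (hd : 1 ≤ d)
    (x : EuclideanSpace ℝ (Fin d)) (k : ℕ) (hk1 : 1 ≤ k) (hkd : k ≤ d)
    (S : Finset (Fin d)) (hScard : S.card = k)
    (hStop : ∀ i ∈ S, ∀ j ∉ S, |x j| ≤ |x i|) :
    ‖x - maskedVector x S‖ ^ 2 ≤ (1 - (k : ℝ) / d) * ‖x‖ ^ 2 :=
  topk_contraction_general d x k S hScard hStop
end

section
/- Let d ≥ 1, let x ∈ ℝ^d, let 1 ≤ k ≤ d be integers, and let c ∈ [0,1]. Let H ⊆ {1,…,d} be a set with h := |H| ≤ k such that every i ∈ H satisfies x_i² ≥ c·‖x‖₂²/d. Let R be a uniformly random subset of {1,…,d} \ H of size k − h, and set S = H ∪ R. Then E‖x − x_S‖₂² ≤ (1 − c·k/d)·‖x‖₂², where the expectation is over the random choice of R. In particular, when every coordinate kept in H satisfies x_i² ≥ ‖x‖₂²/d (e.g. when c = 1), the operator keeping the detected heavy coordinates H exactly and filling the remaining k − |H| slots with uniformly random non-heavy coordinates is a (k/d)-contraction in expectation. -/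
open Finset

/-!
Write `h = |H|` and `T = ∑_{i ∉ H} x_i²`. Each light coordinate `i ∉ H` survives in `x - x_S`
exactly when it is not drawn into `R`, which happens for a fraction `(d - k)/(d - h)` of the
subsets, so the average of `‖x - x_S‖²` is `(d - k)/(d - h) · T`. The heavy coordinates give
`T ≤ (1 - c h/d) ‖x‖²`, and finally
`1 - c k/d - (d - k)/(d - h) · (1 - c h/d) = (k - h)(1 - c)/(d - h) ≥ 0`.
-/

section Sampling

variable {α : Type*} [DecidableEq α]

lemma filter_notMem_powersetCard (s : Finset α) (m : ℕ) (a : α) :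
    {R ∈ powersetCard m s | a ∉ R} = powersetCard m (s.erase a) := by
  ext R
  simp only [mem_filter, mem_powersetCard, subset_erase]
  tauto

lemma sum_powersetCard_sum_sdiff {M : Type*} [AddCommMonoid M] (s : Finset α) (m : ℕ)
    (f : α → M) :
    ∑ R ∈ powersetCard m s, ∑ i ∈ s \ R, f i = (#s - 1).choose m • ∑ i ∈ s, f i := by
  calc ∑ R ∈ powersetCard m s, ∑ i ∈ s \ R, f i
      = ∑ i ∈ s, ∑ R ∈ powersetCard m s with i ∉ R, f i := by
        refine sum_comm' fun R i => ?_
        simp only [mem_sdiff, mem_filter, mem_powersetCard]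
        tauto
    _ = ∑ i ∈ s, (#s - 1).choose m • f i := by
        refine sum_congr rfl fun i hi => ?_
        rw [sum_const, filter_notMem_powersetCard, card_powersetCard, card_erase_of_mem hi]
    _ = (#s - 1).choose m • ∑ i ∈ s, f i := smul_sum.symm

lemma sum_powersetCard_sum_sdiff_div_card {K : Type*} [Field K] [CharZero K] (s : Finset α)
    (m : ℕ) (f : α → K) :
    (∑ R ∈ powersetCard m s, ∑ i ∈ s \ R, f i) / #(powersetCard m s)
      = ((#s - m : ℕ) : K) / #s * ∑ i ∈ s, f i := by
  rw [sum_powersetCard_sum_sdiff, card_powersetCard, nsmul_eq_mul]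
  obtain hms | hms := lt_or_ge #s m
  · simp [Nat.choose_eq_zero_of_lt hms, Nat.sub_eq_zero_of_le hms.le]
  obtain hs | hs := Nat.eq_zero_or_pos #s
  · simp [card_eq_zero.mp hs]
  have hchoose : (#s - 1).choose m * #s = (#s).choose m * (#s - m) := by
    obtain ⟨n, hn⟩ := Nat.exists_eq_add_one_of_ne_zero hs.ne'
    rw [hn, Nat.add_sub_cancel]
    exact Nat.choose_mul_succ_eq n m
  have hpos : ((#s).choose m : K) ≠ 0 := Nat.cast_ne_zero.mpr (Nat.choose_pos hms).ne'
  have hs' : (#s : K) ≠ 0 := Nat.cast_ne_zero.mpr hs.ne'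
  field_simp
  linear_combination (∑ i ∈ s, f i) * (by exact_mod_cast hchoose :
    ((#s - 1).choose m : K) * #s = ((#s).choose m : K) * (#s - m : ℕ))

end Sampling

lemma sum_compl_sq_le_of_le_sq {ι : Type*} [Fintype ι] [DecidableEq ι]
    (x : EuclideanSpace ℝ ι) (H : Finset ι) (t : ℝ) (hH : ∀ i ∈ H, t ≤ x i ^ 2) :
    ∑ i ∈ univ \ H, x i ^ 2 ≤ ‖x‖ ^ 2 - #H * t := by
  have hsplit := sum_sdiff (f := fun i => x i ^ 2) (subset_univ H)
  have hheavy : #H * t ≤ ∑ i ∈ H, x i ^ 2 := by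
    simpa only [sum_const, nsmul_eq_mul] using sum_le_sum hH
  rw [EuclideanSpace.real_norm_sq_eq]
  linarith

lemma norm_sub_maskedVector_sq {d : ℕ} (x : EuclideanSpace ℝ (Fin d)) (S : Finset (Fin d)) :
    ‖x - maskedVector x S‖ ^ 2 = ∑ i ∈ univ \ S, x i ^ 2 := by
  have hcoord : ∀ i, (x - maskedVector x S) i ^ 2 = if i ∈ S then 0 else x i ^ 2 := by
    intro i
    by_cases hi : i ∈ S <;> simp [maskedVector, hi]
  rw [EuclideanSpace.real_norm_sq_eq, sum_congr rfl fun i _ => hcoord i, sum_ite,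
    sum_const_zero, zero_add, filter_not, filter_mem_eq_inter, univ_inter]

lemma sub_div_sub_mul_le {d k h c : ℝ} (hh : 0 ≤ h) (hhk : h ≤ k) (hkd : k ≤ d)
    (hc : c ≤ 1) :
    (d - k) / (d - h) * (1 - c * h / d) ≤ 1 - c * k / d := by
  obtain rfl | hhd := eq_or_lt_of_le (hhk.trans hkd)
  · rw [sub_self, div_zero, zero_mul, sub_nonneg]
    exact div_le_one_of_le₀ (by nlinarith) hh
  have hd : d ≠ 0 := by linarith
  have hgap :
      1 - c * k / d - (d - k) / (d - h) * (1 - c * h / d) = (k - h) * (1 - c) / (d - h) := by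
    field_simp
    ring
  have := div_nonneg (mul_nonneg (sub_nonneg.2 hhk) (sub_nonneg.2 hc)) (sub_nonneg.2 hhd.le)
  linarith

theorem heavymix_contraction_general (d k : ℕ) (hkd : k ≤ d)
    (c : ℝ) (hc1 : c ≤ 1)
    (x : EuclideanSpace ℝ (Fin d))
    (H : Finset (Fin d)) (hHcard : H.card ≤ k)
    (hHheavy : ∀ i ∈ H, c * ‖x‖ ^ 2 / d ≤ x i ^ 2) :
    (∑ R ∈ Finset.powersetCard (k - H.card) ((Finset.univ : Finset (Fin d)) \ H),
        ‖x - maskedVector x (H ∪ R)‖ ^ 2) /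
      ((Finset.powersetCard (k - H.card) ((Finset.univ : Finset (Fin d)) \ H)).card : ℝ)
      ≤ (1 - c * k / d) * ‖x‖ ^ 2 := by
  have hterm : ∀ R ∈ powersetCard (k - #H) (univ \ H),
      ‖x - maskedVector x (H ∪ R)‖ ^ 2 = ∑ i ∈ (univ \ H) \ R, x i ^ 2 := fun R _ => by
    rw [norm_sub_maskedVector_sq, sdiff_sdiff_left, sup_eq_union]
  have hcard : #(univ \ H) - (k - #H) = d - k := by
    rw [← compl_eq_univ_sdiff, card_compl, Fintype.card_fin]
    omega
  have htail : ∑ i ∈ univ \ H, x i ^ 2 ≤ (1 - c * #H / d) * ‖x‖ ^ 2 := by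
    calc _ ≤ ‖x‖ ^ 2 - #H * (c * ‖x‖ ^ 2 / d) := sum_compl_sq_le_of_le_sq x H _ hHheavy
      _ = _ := by ring
  rw [sum_congr rfl hterm, sum_powersetCard_sum_sdiff_div_card, hcard, ← compl_eq_univ_sdiff,
    card_compl, Fintype.card_fin, Nat.cast_sub hkd, Nat.cast_sub (hHcard.trans hkd),
    compl_eq_univ_sdiff]
  have hkd' : (k : ℝ) ≤ d := by exact_mod_cast hkd
  have hHd : (#H : ℝ) ≤ d := by exact_mod_cast hHcard.trans hkd
  calc ((d : ℝ) - k) / (d - #H) * ∑ i ∈ univ \ H, x i ^ 2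
      ≤ (d - k) / (d - #H) * ((1 - c * #H / d) * ‖x‖ ^ 2) := by
        gcongr
    _ ≤ (1 - c * k / d) * ‖x‖ ^ 2 := by
        rw [← mul_assoc]
        gcongr
        exact sub_div_sub_mul_le (Nat.cast_nonneg _) (by exact_mod_cast hHcard) hkd' hc1

/-- Combinatorial core of the HEAVYMIX contraction lemma: keep a set `H` of at
most `k` detected coordinates, each satisfying `x i ^ 2 ≥ c ‖x‖₂² / d`, and fill
the remaining `k - |H|` slots with a uniformly random subset `R` of the other
coordinates; then with `S = H ∪ R`,
`E ‖x - x_S‖₂² ≤ (1 - c k / d) ‖x‖₂²`. -/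
theorem heavymix_contraction (d k : ℕ) (hd : 1 ≤ d) (hk1 : 1 ≤ k) (hkd : k ≤ d)
    (c : ℝ) (hc0 : 0 ≤ c) (hc1 : c ≤ 1)
    (x : EuclideanSpace ℝ (Fin d))
    (H : Finset (Fin d)) (hHcard : H.card ≤ k)
    (hHheavy : ∀ i ∈ H, c * ‖x‖ ^ 2 / d ≤ x i ^ 2) :
    (∑ R ∈ Finset.powersetCard (k - H.card) ((Finset.univ : Finset (Fin d)) \ H),
        ‖x - maskedVector x (H ∪ R)‖ ^ 2) /
      ((Finset.powersetCard (k - H.card) ((Finset.univ : Finset (Fin d)) \ H)).card : ℝ)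
      ≤ (1 - c * k / d) * ‖x‖ ^ 2 :=
  heavymix_contraction_general d k hkd c hc1 x H hHcard hHheavy
end

section
/- Let d, b ≥ 1, let x ∈ ℝ^d, and consider a Count Sketch row of x: a uniformly random hash h : {1,…,d} → {1,…,b} and uniformly random signs s : {1,…,d} → {−1,+1}, with all 2d random variables h(1),…,h(d),s(1),…,s(d) mutually independent; the row is C ∈ ℝ^b with C(y) = Σ_{i : h(i)=y} s(i)·x_i, and the point estimate of coordinate i is x̂_i = s(i)·C(h(i)). Then for every coordinate i, E[x̂_i] = x_i. -/
open Finset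

/-- The real-valued sign `±1` associated to a boolean. -/
def csSign (s : Bool) : ℝ := if s then 1 else -1

/-- A Count Sketch row: bucket `y` stores `∑_{i : h i = y} s i • x i`. -/
noncomputable def csRow {d b : ℕ} (x : EuclideanSpace ℝ (Fin d))
    (h : Fin d → Fin b) (s : Fin d → Bool) (y : Fin b) : ℝ :=
  ∑ i ∈ Finset.univ.filter (fun i => h i = y), csSign (s i) * x i

/-- The Count Sketch row point estimate of coordinate `i`: `s i • C (h i)`. -/
noncomputable def csEstimate {d b : ℕ} (x : EuclideanSpace ℝ (Fin d))
    (h : Fin d → Fin b) (s : Fin d → Bool) (i : Fin d) : ℝ :=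
  csSign (s i) * csRow x h s (h i)

lemma csSign_sq (t : Bool) : csSign t * csSign t = 1 := by
  cases t <;> simp [csSign]

lemma csSign_not (t : Bool) : csSign (!t) = - csSign t := by
  cases t <;> simp [csSign]

lemma sum_sign_ne {d : ℕ} (i j : Fin d) (hij : j ≠ i) :
    ∑ s : Fin d → Bool, csSign (s i) * csSign (s j) = 0 := by
  have hinv : Function.Involutive (fun s : Fin d → Bool => Function.update s j (!s j)) := by
    intro s
    funext k
    by_cases hk : k = j
    · subst hk; simp [Function.update_self]
    · simp [Function.update_of_ne hk]
  have h1 : ∑ s : Fin d → Bool, csSign (s i) * csSign (s j)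
      = ∑ s : Fin d → Bool, csSign ((Function.update s j (!s j)) i) *
          csSign ((Function.update s j (!s j)) j) :=
    (Fintype.sum_equiv hinv.toPerm _ _ (fun s => rfl)).symm
  have h2 : ∀ s : Fin d → Bool,
      csSign ((Function.update s j (!s j)) i) * csSign ((Function.update s j (!s j)) j)
        = -(csSign (s i) * csSign (s j)) := by
    intro s
    rw [Function.update_of_ne (Ne.symm hij), Function.update_self, csSign_not]
    ring
  have h3 : ∑ s : Fin d → Bool, csSign (s i) * csSign (s j)
      = - ∑ s : Fin d → Bool, csSign (s i) * csSign (s j) := by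
    conv_lhs => rw [h1, Finset.sum_congr rfl fun s _ => h2 s]
    rw [Finset.sum_neg_distrib]
  linarith

/-- Unbiasedness of the Count Sketch point estimate: averaging over a uniformly
random hash `h : {1,…,d} → {1,…,b}` and uniformly random signs
`s : {1,…,d} → {±1}`, all mutually independent, the estimate
`x̂ i = s i • C (h i)` satisfies `E[x̂ i] = x i`. -/
theorem countSketch_estimate_unbiased (d b : ℕ) (hd : 1 ≤ d) (hb : 1 ≤ b)
    (x : EuclideanSpace ℝ (Fin d)) (i : Fin d) :
    (∑ h : Fin d → Fin b, ∑ s : Fin d → Bool, csEstimate x h s i) /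
      (((b : ℝ) ^ d) * 2 ^ d) = x i := by
  have hsum : ∀ h : Fin d → Fin b, ∑ s : Fin d → Bool, csEstimate x h s i
      = 2 ^ d * x i := by
    intro h
    simp only [csEstimate, csRow, Finset.mul_sum]
    rw [Finset.sum_comm]
    rw [Finset.sum_eq_single_of_mem i (by simp)]
    · have key : ∀ s : Fin d → Bool, csSign (s i) * (csSign (s i) * x i) = x i := by
        intro s; rw [← mul_assoc, csSign_sq, one_mul]
      rw [Finset.sum_congr rfl fun s _ => key s, Finset.sum_const, card_univ]
      simp [mul_comm]
    · intro j _ hji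
      have key : ∀ s : Fin d → Bool,
          csSign (s i) * (csSign (s j) * x j) = (csSign (s i) * csSign (s j)) * x j :=
        fun s => by ring
      rw [Finset.sum_congr rfl fun s _ => key s, ← Finset.sum_mul,
        sum_sign_ne i j hji, zero_mul]
  rw [Finset.sum_congr rfl fun h _ => hsum h, Finset.sum_const, card_univ]
  have hb' : ((b : ℝ) ^ d) ≠ 0 := by positivity
  have h2 : ((2 : ℝ) ^ d) ≠ 0 := by positivity
  simp only [Fintype.card_fun, Fintype.card_fin, nsmul_eq_mul]
  push_cast
  field_simp
end

section
/- Let d, b ≥ 1, let x ∈ ℝ^d, and consider a Count Sketch row of x: a uniformly random hash h : {1,…,d} → {1,…,b} and uniformly random signs s : {1,…,d} → {−1,+1}, with all 2d random variables mutually independent; the row is C ∈ ℝ^b with C(y) = Σ_{i : h(i)=y} s(i)·x_i. Then Var(Σ_{y=1}^{b} C(y)²) = (4/b)·Σ_{i<j} x_i²·x_j² ≤ 2‖x‖₂⁴/b. -/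
open Finset

lemma sum_flip {d : ℕ} (i : Fin d) (F : (Fin d → Bool) → ℝ)
    (hF : ∀ s, F (Function.update s i (!(s i))) = - F s) :
    ∑ s : Fin d → Bool, F s = 0 := by
  have hinv : Function.Involutive (fun s : Fin d → Bool => Function.update s i (!(s i))) := by
    intro s; funext m
    rcases eq_or_ne m i with rfl | hm
    · simp
    · simp [Function.update_of_ne hm]
  have h1 : ∑ s : Fin d → Bool, F (Function.update s i (!(s i))) = ∑ s : Fin d → Bool, F s :=
    Fintype.sum_bijective _ hinv.bijective _ _ (fun s => rfl)
  have h2 : ∑ s : Fin d → Bool, F (Function.update s i (!(s i)))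
      = - ∑ s : Fin d → Bool, F s := by
    rw [← Finset.sum_neg_distrib]
    exact Finset.sum_congr rfl (fun s _ => hF s)
  linarith [h1, h2]

lemma sum_sign_single {d : ℕ} (i : Fin d) (G : (Fin d → Bool) → ℝ)
    (hG : ∀ s t, G (Function.update s i t) = G s) :
    ∑ s : Fin d → Bool, csSign (s i) * G s = 0 := by
  apply sum_flip i
  intro s
  rw [Function.update_self, csSign_not, hG]
  ring

lemma sum_sign_pair {d : ℕ} {i j : Fin d} (hij : i ≠ j) :
    ∑ s : Fin d → Bool, csSign (s i) * csSign (s j) = 0 :=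
  sum_sign_single i (fun s => csSign (s j))
    (fun s t => by simp [Function.update_of_ne (Ne.symm hij)])

lemma sum_sign_single₃ {d : ℕ} {m a b c : Fin d} (ha : a ≠ m) (hb : b ≠ m) (hc : c ≠ m) :
    ∑ s : Fin d → Bool, csSign (s m) * (csSign (s a) * csSign (s b) * csSign (s c)) = 0 :=
  sum_sign_single m _ (fun s t => by
    rw [Function.update_of_ne ha, Function.update_of_ne hb, Function.update_of_ne hc])

lemma sum_sign_four {d : ℕ} {i j k l : Fin d} (hij : i ≠ j) (hkl : k ≠ l) :
    ∑ s : Fin d → Bool, csSign (s i) * csSign (s j) * (csSign (s k) * csSign (s l))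
      = if (k = i ∧ l = j) ∨ (k = j ∧ l = i) then (2 : ℝ) ^ d else 0 := by
  by_cases hm : (k = i ∧ l = j) ∨ (k = j ∧ l = i)
  · rw [if_pos hm]
    have hone : ∀ s : Fin d → Bool,
        csSign (s i) * csSign (s j) * (csSign (s k) * csSign (s l)) = 1 := by
      intro s
      rcases hm with ⟨rfl, rfl⟩ | ⟨rfl, rfl⟩
      · have := csSign_sq (s k); have := csSign_sq (s l); nlinarith [csSign_sq (s k), csSign_sq (s l)]
      · nlinarith [csSign_sq (s k), csSign_sq (s l)]
    rw [Finset.sum_congr rfl (fun s _ => hone s), Finset.sum_const]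
    simp [Fintype.card_fun]
  · rw [if_neg hm]
    push_neg at hm
    obtain ⟨h1, h2⟩ := hm
    rcases eq_or_ne i k with rfl | hik
    · -- i = k; then l ≠ j (from h1), j ≠ i, j ≠ k, j ≠ l
      have hlj : l ≠ j := h1 rfl
      have := sum_sign_single₃ (m := j) (a := i) (b := i) (c := l) hij hij hlj
      calc ∑ s : Fin d → Bool, csSign (s i) * csSign (s j) * (csSign (s i) * csSign (s l))
          = ∑ s : Fin d → Bool, csSign (s j) * (csSign (s i) * csSign (s i) * csSign (s l)) := by
            exact Finset.sum_congr rfl (fun s _ => by ring)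
        _ = 0 := this
    · rcases eq_or_ne i l with rfl | hil
      · -- i = l; then k ≠ j (from h2), j ≠ i, j ≠ k, j ≠ l
        have hkj : k ≠ j := fun e => (h2 e) rfl
        have := sum_sign_single₃ (m := j) (a := i) (b := k) (c := i) hij hkj hij
        calc ∑ s : Fin d → Bool, csSign (s i) * csSign (s j) * (csSign (s k) * csSign (s i))
            = ∑ s : Fin d → Bool, csSign (s j) * (csSign (s i) * csSign (s k) * csSign (s i)) := by
              exact Finset.sum_congr rfl (fun s _ => by ring)
          _ = 0 := this
      · -- i ∉ {k, l}: flip at i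
        have := sum_sign_single₃ (m := i) (a := j) (b := k) (c := l)
          (Ne.symm hij) (Ne.symm hik) (Ne.symm hil)
        calc ∑ s : Fin d → Bool, csSign (s i) * csSign (s j) * (csSign (s k) * csSign (s l))
            = ∑ s : Fin d → Bool, csSign (s i) * (csSign (s j) * csSign (s k) * csSign (s l)) := by
              exact Finset.sum_congr rfl (fun s _ => by ring)
          _ = 0 := this

lemma sum_hash_pair {d b : ℕ} (hb : 1 ≤ b) {i j : Fin d} (hij : i ≠ j) :
    ∑ h : Fin d → Fin b, (if h j = h i then (1 : ℝ) else 0) = (b : ℝ) ^ (d - 1) := by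
  rw [Finset.sum_boole]
  have e : {h : Fin d → Fin b // h j = h i} ≃ ({m : Fin d // m ≠ j} → Fin b) :=
    { toFun := fun h m => h.1 m.1
      invFun := fun g => ⟨fun m => if hm : m = j then g ⟨i, hij⟩ else g ⟨m, hm⟩, by
        simp [hij]⟩
      left_inv := by
        rintro ⟨h, hh⟩
        ext m
        by_cases hm : m = j
        · subst hm; simp [hh]
        · simp [hm]
      right_inv := by
        intro g
        funext m
        simp [m.2] }
  have hcard : (Finset.univ.filter (fun h : Fin d → Fin b => h j = h i)).card = b ^ (d - 1) := by
    rw [← Fintype.card_subtype]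
    rw [Fintype.card_congr e, Fintype.card_fun, Fintype.card_fin]
    congr 1
    have : Fintype.card {m : Fin d // m ≠ j} = d - 1 := by
      have := Fintype.card_subtype_compl (α := Fin d) (fun m => m = j)
      simpa [Fintype.card_subtype_eq, Fintype.card_fin] using this
    rw [this]
  rw [hcard]
  push_cast
  ring

lemma offDiag_double {d : ℕ} (f : Fin d × Fin d → ℝ) (hsymm : ∀ p : Fin d × Fin d, f p.swap = f p) :
    ∑ p ∈ (univ : Finset (Fin d)).offDiag, f p
      = 2 * ∑ p ∈ Finset.univ.filter (fun p : Fin d × Fin d => p.1 < p.2), f p := by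
  have hset : (univ : Finset (Fin d)).offDiag
      = Finset.univ.filter (fun p : Fin d × Fin d => p.1 < p.2)
        ∪ Finset.univ.filter (fun p : Fin d × Fin d => p.2 < p.1) := by
    ext p
    simp only [Finset.mem_offDiag, Finset.mem_union, Finset.mem_filter, Finset.mem_univ,
      true_and]
    constructor
    · intro hne; exact lt_or_gt_of_ne hne
    · rintro (h | h)
      · exact ne_of_lt h
      · exact (ne_of_lt h).symm
  have hdisj : Disjoint (Finset.univ.filter (fun p : Fin d × Fin d => p.1 < p.2))
      (Finset.univ.filter (fun p : Fin d × Fin d => p.2 < p.1)) := by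
    rw [Finset.disjoint_filter]
    intro p _ h1 h2
    exact absurd h2 (not_lt_of_gt h1)
  rw [hset, Finset.sum_union hdisj]
  have hswap : ∑ p ∈ Finset.univ.filter (fun p : Fin d × Fin d => p.2 < p.1), f p
      = ∑ p ∈ Finset.univ.filter (fun p : Fin d × Fin d => p.1 < p.2), f p := by
    refine Finset.sum_nbij' Prod.swap Prod.swap ?_ ?_ ?_ ?_ ?_
    · intro p hp; simp only [Finset.mem_filter, Finset.mem_univ, true_and] at *; exact hp
    · intro p hp; simp only [Finset.mem_filter, Finset.mem_univ, true_and] at *; exact hp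
    · intro p _; simp
    · intro p _; simp
    · intro p _; exact (hsymm p).symm
  rw [hswap]
  ring

lemma Z_expand {d b : ℕ} (x : EuclideanSpace ℝ (Fin d)) (h : Fin d → Fin b) (s : Fin d → Bool) :
    ∑ y : Fin b, csRow x h s y ^ 2
      = ∑ i : Fin d, ∑ j : Fin d,
          (if h j = h i then (1 : ℝ) else 0) * (csSign (s i) * x i * (csSign (s j) * x j)) := by
  have hrow : ∀ y, csRow x h s y = ∑ i : Fin d, if h i = y then csSign (s i) * x i else 0 :=
    fun y => Finset.sum_filter _ _
  calc ∑ y : Fin b, csRow x h s y ^ 2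
      = ∑ y : Fin b, ∑ i : Fin d, ∑ j : Fin d,
          (if h i = y then csSign (s i) * x i else 0) *
            (if h j = y then csSign (s j) * x j else 0) := by
        refine Finset.sum_congr rfl fun y _ => ?_
        rw [hrow, sq, Finset.sum_mul_sum]
    _ = ∑ i : Fin d, ∑ j : Fin d, ∑ y : Fin b,
          (if h i = y then csSign (s i) * x i else 0) *
            (if h j = y then csSign (s j) * x j else 0) := by
        rw [Finset.sum_comm]
        exact Finset.sum_congr rfl fun i _ => Finset.sum_comm
    _ = ∑ i : Fin d, ∑ j : Fin d,
          (if h j = h i then (1 : ℝ) else 0) * (csSign (s i) * x i * (csSign (s j) * x j)) := by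
        refine Finset.sum_congr rfl fun i _ => Finset.sum_congr rfl fun j _ => ?_
        simp only [ite_mul, zero_mul, mul_ite, mul_zero]
        rw [Finset.sum_ite_eq]
        simp only [Finset.mem_univ, if_true]
        exact if_congr eq_comm (one_mul _).symm rfl

lemma Z_split {d b : ℕ} (x : EuclideanSpace ℝ (Fin d)) (h : Fin d → Fin b) (s : Fin d → Bool) :
    ∑ y : Fin b, csRow x h s y ^ 2
      = (∑ i : Fin d, x i ^ 2)
        + ∑ p ∈ (univ : Finset (Fin d)).offDiag,
            (if h p.2 = h p.1 then (1 : ℝ) else 0) *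
              (csSign (s p.1) * x p.1 * (csSign (s p.2) * x p.2)) := by
  rw [Z_expand]
  rw [← Finset.sum_product']
  rw [← Finset.diag_union_offDiag,
    Finset.sum_union (Finset.disjoint_diag_offDiag _), Finset.sum_diag]
  congr 1
  refine Finset.sum_congr rfl fun i _ => ?_
  have : csSign (s i) * x i * (csSign (s i) * x i) = (csSign (s i) * csSign (s i)) * x i ^ 2 := by
    ring
  rw [if_pos rfl, this, csSign_sq, one_mul, one_mul]

lemma sum_s_R {d b : ℕ} (x : EuclideanSpace ℝ (Fin d)) (h : Fin d → Fin b) :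
    ∑ s : Fin d → Bool, ∑ p ∈ (univ : Finset (Fin d)).offDiag,
        (if h p.2 = h p.1 then (1 : ℝ) else 0) *
          (csSign (s p.1) * x p.1 * (csSign (s p.2) * x p.2)) = 0 := by
  rw [Finset.sum_comm]
  refine Finset.sum_eq_zero fun p hp => ?_
  have hne : p.1 ≠ p.2 := (Finset.mem_offDiag.mp hp).2.2
  have : ∀ s : Fin d → Bool,
      (if h p.2 = h p.1 then (1 : ℝ) else 0) *
          (csSign (s p.1) * x p.1 * (csSign (s p.2) * x p.2))
        = ((if h p.2 = h p.1 then (1 : ℝ) else 0) * (x p.1 * x p.2)) *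
            (csSign (s p.1) * csSign (s p.2)) := fun s => by ring
  rw [Finset.sum_congr rfl fun s _ => this s, ← Finset.mul_sum, sum_sign_pair hne, mul_zero]

lemma w_sq {d b : ℕ} (h : Fin d → Fin b) (p : Fin d × Fin d) :
    (if h p.2 = h p.1 then (1 : ℝ) else 0) * (if h p.2 = h p.1 then (1 : ℝ) else 0)
      = (if h p.2 = h p.1 then (1 : ℝ) else 0) := by
  by_cases hc : h p.2 = h p.1 <;> simp [hc]

lemma sum_s_R_sq {d b : ℕ} (x : EuclideanSpace ℝ (Fin d)) (h : Fin d → Fin b) :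
    ∑ s : Fin d → Bool, (∑ p ∈ (univ : Finset (Fin d)).offDiag,
        (if h p.2 = h p.1 then (1 : ℝ) else 0) *
          (csSign (s p.1) * x p.1 * (csSign (s p.2) * x p.2))) ^ 2
      = 2 ^ d * 2 * ∑ p ∈ (univ : Finset (Fin d)).offDiag,
          (if h p.2 = h p.1 then (1 : ℝ) else 0) * (x p.1 ^ 2 * x p.2 ^ 2) := by
  have step1 : ∀ s : Fin d → Bool, (∑ p ∈ (univ : Finset (Fin d)).offDiag,
        (if h p.2 = h p.1 then (1 : ℝ) else 0) *
          (csSign (s p.1) * x p.1 * (csSign (s p.2) * x p.2))) ^ 2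
      = ∑ p ∈ (univ : Finset (Fin d)).offDiag, ∑ q ∈ (univ : Finset (Fin d)).offDiag,
          ((if h p.2 = h p.1 then (1 : ℝ) else 0) * (if h q.2 = h q.1 then (1 : ℝ) else 0)
            * (x p.1 * x p.2 * (x q.1 * x q.2)))
            * (csSign (s p.1) * csSign (s p.2) * (csSign (s q.1) * csSign (s q.2))) := by
    intro s
    rw [sq, Finset.sum_mul_sum]
    exact Finset.sum_congr rfl fun p _ => Finset.sum_congr rfl fun q _ => by ring
  rw [Finset.sum_congr rfl fun s _ => step1 s]
  rw [Finset.sum_comm]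
  have step2 : ∀ p ∈ (univ : Finset (Fin d)).offDiag,
      (∑ s : Fin d → Bool, ∑ q ∈ (univ : Finset (Fin d)).offDiag,
          ((if h p.2 = h p.1 then (1 : ℝ) else 0) * (if h q.2 = h q.1 then (1 : ℝ) else 0)
            * (x p.1 * x p.2 * (x q.1 * x q.2)))
            * (csSign (s p.1) * csSign (s p.2) * (csSign (s q.1) * csSign (s q.2))))
        = 2 ^ d * 2 * ((if h p.2 = h p.1 then (1 : ℝ) else 0) * (x p.1 ^ 2 * x p.2 ^ 2)) := by
    intro p hp
    have hne : p.1 ≠ p.2 := (Finset.mem_offDiag.mp hp).2.2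
    rw [Finset.sum_comm]
    have inner : ∀ q ∈ (univ : Finset (Fin d)).offDiag,
        (∑ s : Fin d → Bool,
          ((if h p.2 = h p.1 then (1 : ℝ) else 0) * (if h q.2 = h q.1 then (1 : ℝ) else 0)
            * (x p.1 * x p.2 * (x q.1 * x q.2)))
            * (csSign (s p.1) * csSign (s p.2) * (csSign (s q.1) * csSign (s q.2))))
        = ((if h p.2 = h p.1 then (1 : ℝ) else 0) * (if h q.2 = h q.1 then (1 : ℝ) else 0)
            * (x p.1 * x p.2 * (x q.1 * x q.2)))
            * (if (q.1 = p.1 ∧ q.2 = p.2) ∨ (q.1 = p.2 ∧ q.2 = p.1) then (2 : ℝ) ^ d else 0) := by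
      intro q hq
      have hne' : q.1 ≠ q.2 := (Finset.mem_offDiag.mp hq).2.2
      rw [← Finset.mul_sum]
      congr 1
      have hfour := sum_sign_four (i := p.1) (j := p.2) (k := q.1) (l := q.2) hne hne'
      exact (Finset.sum_congr rfl fun s _ => by ring).trans hfour
    rw [Finset.sum_congr rfl inner]
    -- now sum over q ∈ offDiag of a function vanishing outside {p, p.swap}
    have hsub : ({p, p.swap} : Finset (Fin d × Fin d)) ⊆ (univ : Finset (Fin d)).offDiag := by
      intro q hq
      rcases Finset.mem_insert.mp hq with rfl | hq
      · exact hp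
      · rw [Finset.mem_singleton.mp hq]
        simp only [Finset.mem_offDiag, Finset.mem_univ, true_and, Prod.fst_swap, Prod.snd_swap]
        exact hne.symm
    have hvanish : ∀ q ∈ (univ : Finset (Fin d)).offDiag,
        q ∉ ({p, p.swap} : Finset (Fin d × Fin d)) →
        ((if h p.2 = h p.1 then (1 : ℝ) else 0) * (if h q.2 = h q.1 then (1 : ℝ) else 0)
            * (x p.1 * x p.2 * (x q.1 * x q.2)))
            * (if (q.1 = p.1 ∧ q.2 = p.2) ∨ (q.1 = p.2 ∧ q.2 = p.1) then (2 : ℝ) ^ d else 0)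
          = 0 := by
      intro q _ hq
      simp only [Finset.mem_insert, Finset.mem_singleton] at hq
      push_neg at hq
      have : ¬ ((q.1 = p.1 ∧ q.2 = p.2) ∨ (q.1 = p.2 ∧ q.2 = p.1)) := by
        rintro (⟨h1, h2⟩ | ⟨h1, h2⟩)
        · exact hq.1 (Prod.ext h1 h2)
        · exact hq.2 (Prod.ext h1 h2)
      rw [if_neg this, mul_zero]
    rw [← Finset.sum_subset hsub hvanish]
    have hpne : p ≠ p.swap := fun e => hne (congrArg Prod.fst e)
    rw [Finset.sum_pair hpne]
    have c1 : ((p.1 = p.1 ∧ p.2 = p.2) ∨ (p.1 = p.2 ∧ p.2 = p.1)) := Or.inl ⟨rfl, rfl⟩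
    have c2 : ((p.swap.1 = p.1 ∧ p.swap.2 = p.2) ∨ (p.swap.1 = p.2 ∧ p.swap.2 = p.1)) :=
      Or.inr ⟨rfl, rfl⟩
    rw [if_pos c1, if_pos c2]
    simp only [Prod.fst_swap, Prod.snd_swap]
    rcases eq_or_ne (h p.2) (h p.1) with hc | hc
    · rw [if_pos hc, if_pos hc.symm]; ring
    · rw [if_neg hc, if_neg (fun e => hc (Eq.symm e))]; ring
  rw [Finset.sum_congr rfl step2, ← Finset.mul_sum]

/-- Variance of the Count Sketch norm estimator: with `Z = ∑_y C(y)²`, averaging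
over a uniformly random hash `h` and uniformly random signs `s`, all mutually
independent, `Var Z = E[Z²] - (E Z)² = (4/b) ∑_{i<j} x i ² x j ² ≤ 2 ‖x‖₂⁴ / b`. -/
theorem countSketch_norm_variance (d b : ℕ) (hd : 1 ≤ d) (hb : 1 ≤ b)
    (x : EuclideanSpace ℝ (Fin d)) :
    (∑ h : Fin d → Fin b, ∑ s : Fin d → Bool, (∑ y : Fin b, csRow x h s y ^ 2) ^ 2) /
          (((b : ℝ) ^ d) * 2 ^ d)
        - ((∑ h : Fin d → Fin b, ∑ s : Fin d → Bool, ∑ y : Fin b, csRow x h s y ^ 2) /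
            (((b : ℝ) ^ d) * 2 ^ d)) ^ 2
      = (4 / b) * ∑ p ∈ Finset.univ.filter (fun p : Fin d × Fin d => p.1 < p.2),
          x p.1 ^ 2 * x p.2 ^ 2 ∧
    (4 / (b : ℝ)) * ∑ p ∈ Finset.univ.filter (fun p : Fin d × Fin d => p.1 < p.2),
          x p.1 ^ 2 * x p.2 ^ 2 ≤ 2 * ‖x‖ ^ 4 / b := by
  set S : ℝ := ∑ i : Fin d, x i ^ 2 with hS
  set Q : ℝ := ∑ p ∈ Finset.univ.filter (fun p : Fin d × Fin d => p.1 < p.2),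
      x p.1 ^ 2 * x p.2 ^ 2 with hQ
  have hoff : ∑ p ∈ (univ : Finset (Fin d)).offDiag, x p.1 ^ 2 * x p.2 ^ 2 = 2 * Q :=
    offDiag_double _ (fun p => by simp [mul_comm])
  have hcards : (Finset.univ : Finset (Fin d → Bool)).card = 2 ^ d := by
    rw [Finset.card_univ, Fintype.card_fun]; simp
  have hcardh : (Finset.univ : Finset (Fin d → Fin b)).card = b ^ d := by
    rw [Finset.card_univ, Fintype.card_fun]; simp
  -- E[Z] computation
  have hEZ : ∑ h : Fin d → Fin b, ∑ s : Fin d → Bool, ∑ y : Fin b, csRow x h s y ^ 2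
      = (b : ℝ) ^ d * 2 ^ d * S := by
    have hs : ∀ h : Fin d → Fin b,
        ∑ s : Fin d → Bool, ∑ y : Fin b, csRow x h s y ^ 2 = 2 ^ d * S := by
      intro h
      rw [Finset.sum_congr rfl fun s _ => Z_split x h s, Finset.sum_add_distrib,
        sum_s_R x h, add_zero, Finset.sum_const, hcards, nsmul_eq_mul]
      push_cast
      ring
    rw [Finset.sum_congr rfl fun h _ => hs h, Finset.sum_const, hcardh, nsmul_eq_mul]
    push_cast
    ring
  -- E[Z^2] computation
  have hEZ2 : ∑ h : Fin d → Fin b, ∑ s : Fin d → Bool, (∑ y : Fin b, csRow x h s y ^ 2) ^ 2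
      = (b : ℝ) ^ d * 2 ^ d * S ^ 2 + 2 ^ d * 2 * ((b : ℝ) ^ (d - 1) * (2 * Q)) := by
    have hs : ∀ h : Fin d → Fin b,
        ∑ s : Fin d → Bool, (∑ y : Fin b, csRow x h s y ^ 2) ^ 2
          = 2 ^ d * S ^ 2 + 2 ^ d * 2 * ∑ p ∈ (univ : Finset (Fin d)).offDiag,
              (if h p.2 = h p.1 then (1 : ℝ) else 0) * (x p.1 ^ 2 * x p.2 ^ 2) := by
      intro h
      have expand : ∀ s : Fin d → Bool,
          (∑ y : Fin b, csRow x h s y ^ 2) ^ 2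
            = S ^ 2
              + 2 * S * (∑ p ∈ (univ : Finset (Fin d)).offDiag,
                  (if h p.2 = h p.1 then (1 : ℝ) else 0) *
                    (csSign (s p.1) * x p.1 * (csSign (s p.2) * x p.2)))
              + (∑ p ∈ (univ : Finset (Fin d)).offDiag,
                  (if h p.2 = h p.1 then (1 : ℝ) else 0) *
                    (csSign (s p.1) * x p.1 * (csSign (s p.2) * x p.2))) ^ 2 := by
        intro s
        rw [Z_split x h s]
        ring
      rw [Finset.sum_congr rfl fun s _ => expand s, Finset.sum_add_distrib,
        Finset.sum_add_distrib, Finset.sum_const, hcards, nsmul_eq_mul,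
        ← Finset.mul_sum, sum_s_R x h, mul_zero, add_zero, sum_s_R_sq x h]
      push_cast
      ring
    rw [Finset.sum_congr rfl fun h _ => hs h, Finset.sum_add_distrib, Finset.sum_const,
      hcardh, nsmul_eq_mul, ← Finset.mul_sum, Finset.sum_comm]
    have hhash : ∑ p ∈ (univ : Finset (Fin d)).offDiag,
        ∑ h : Fin d → Fin b, (if h p.2 = h p.1 then (1 : ℝ) else 0) * (x p.1 ^ 2 * x p.2 ^ 2)
          = (b : ℝ) ^ (d - 1) * (2 * Q) := by
      have : ∀ p ∈ (univ : Finset (Fin d)).offDiag,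
          ∑ h : Fin d → Fin b, (if h p.2 = h p.1 then (1 : ℝ) else 0) * (x p.1 ^ 2 * x p.2 ^ 2)
            = (b : ℝ) ^ (d - 1) * (x p.1 ^ 2 * x p.2 ^ 2) := by
        intro p hp
        have hne : p.1 ≠ p.2 := (Finset.mem_offDiag.mp hp).2.2
        rw [← Finset.sum_mul, sum_hash_pair hb hne]
      rw [Finset.sum_congr rfl this, ← Finset.mul_sum, hoff]
    rw [hhash]
    push_cast
    ring
  have hb0 : (0 : ℝ) < (b : ℝ) := by exact_mod_cast hb
  have h2d : (0 : ℝ) < (2 : ℝ) ^ d := by positivity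
  have hbd : ((b : ℝ) ^ d : ℝ) = (b : ℝ) ^ (d - 1) * (b : ℝ) := by
    rw [← pow_succ]
    congr 1
    omega
  constructor
  · rw [hEZ, hEZ2, hbd]
    field_simp
    ring
  · have hnorm : ‖x‖ ^ 2 = S := by
      rw [EuclideanSpace.norm_eq, Real.sq_sqrt (by positivity)]
      exact Finset.sum_congr rfl fun i _ => by rw [Real.norm_eq_abs, sq_abs]
    have hx4 : ‖x‖ ^ 4 = S ^ 2 := by
      rw [show ‖x‖ ^ 4 = (‖x‖ ^ 2) ^ 2 by ring, hnorm]
    have hSsq : S ^ 2 = (∑ i : Fin d, x i ^ 4) + 2 * Q := by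
      rw [hS, sq, Finset.sum_mul_sum, ← Finset.sum_product' (f := fun i j => x i ^ 2 * x j ^ 2),
        ← Finset.diag_union_offDiag, Finset.sum_union (Finset.disjoint_diag_offDiag _),
        Finset.sum_diag, hoff]
      congr 1
      exact Finset.sum_congr rfl fun i _ => by ring
    have h4 : (0 : ℝ) ≤ ∑ i : Fin d, x i ^ 4 := Finset.sum_nonneg fun i _ => by positivity
    rw [hx4]
    rw [show (4 / (b : ℝ)) * Q = (4 * Q) / b by ring, show 2 * S ^ 2 / (b : ℝ) = (2 * S ^ 2) / b
      from rfl]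
    have hle : 4 * Q ≤ 2 * S ^ 2 := by linarith
    exact (div_le_div_iff_of_pos_right hb0).mpr hle
end

section
/- Let a ∈ ℝ, t > 0, and let Y₁,…,Y_r be independent identically distributed real random variables such that P(|Y_j − a| > t) ≤ 1/3 for each j. Then the sample median M of Y₁,…,Y_r satisfies P(|M − a| > t) ≤ exp(−r/18). -/
/-!
If the median lies more than `t` away from `a`, then so do at least `⌈r/2⌉` of the `Y_j`. These
are independent events of probability at most `1/3`, so the number `N` of them that occur has
`E[2^N] ≤ (4/3)^r`, and Markov's inequality (the Chernoff bound at parameter `log 2`) gives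
`P(N ≥ r/2) ≤ (4/3)^r / 2^(r/2) = (8/9)^(r/2) ≤ exp(-r/18)`, using `8/9 ≤ exp(-1/9)`.
-/

open MeasureTheory ProbabilityTheory

/-- The sample median of `v : Fin r → ℝ`: the `⌈r/2⌉`-th order statistic
(`⌈r/2⌉ = (r+1)/2` in natural-number arithmetic, and we index from zero). -/
noncomputable def sampleMedian {r : ℕ} (hr : 0 < r) (v : Fin r → ℝ) : ℝ :=
  v (Tuple.sort v ⟨(r + 1) / 2 - 1, by omega⟩)

open Finset Real

section OrderStatistics

variable {α : Type*} [LinearOrder α] {n : ℕ} (v : Fin n → α) (i : Fin n) {c : α}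

lemma sub_le_card_filter_lt_of_lt_sort (h : c < v (Tuple.sort v i)) :
    n - i ≤ #{j | c < v j} := by
  rw [← Fin.card_Ici]
  refine card_le_card_of_injOn (Tuple.sort v) (fun p hp => ?_) (Tuple.sort v).injective.injOn
  simp only [coe_Ici, Set.mem_Ici, coe_filter, mem_univ, true_and, Set.mem_ofPred_eq] at hp ⊢
  exact h.trans_le (Tuple.monotone_sort v hp)

lemma succ_le_card_filter_lt_of_sort_lt (h : v (Tuple.sort v i) < c) :
    i + 1 ≤ #{j | v j < c} := by
  rw [← Fin.card_Iic]
  refine card_le_card_of_injOn (Tuple.sort v) (fun p hp => ?_) (Tuple.sort v).injective.injOn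
  simp only [coe_Iic, Set.mem_Iic, coe_filter, mem_univ, true_and, Set.mem_ofPred_eq] at hp ⊢
  exact (Tuple.monotone_sort v hp).trans_lt h

end OrderStatistics

lemma le_card_filter_of_lt_abs_sampleMedian_sub {r : ℕ} (hr : 0 < r) (v : Fin r → ℝ)
    {a t : ℝ} (h : t < |sampleMedian hr v - a|) : (r + 1) / 2 ≤ #{j | t < |v j - a|} := by
  unfold sampleMedian at h
  rcases lt_abs.1 h with h | h
  · have hcount := sub_le_card_filter_lt_of_lt_sort v _ (c := a + t) (by linarith)
    have hsub : #{j | a + t < v j} ≤ #{j | t < |v j - a|} :=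
      card_le_card fun j => by
        simp only [mem_filter, mem_univ, true_and]
        exact fun hj => lt_abs.2 (Or.inl (by linarith))
    dsimp only at hcount
    omega
  · have hcount := succ_le_card_filter_lt_of_sort_lt v _ (c := a - t) (by linarith)
    have hsub : #{j | v j < a - t} ≤ #{j | t < |v j - a|} :=
      card_le_card fun j => by
        simp only [mem_filter, mem_univ, true_and]
        exact fun hj => lt_abs.2 (Or.inr (by linarith))
    dsimp only at hcount
    omega

section Chernoff

variable {Ω : Type*}

lemma exp_mul_indicator_one (B : Set Ω) (t : ℝ) (ω : Ω) :
    exp (t * B.indicator 1 ω) = 1 + (exp t - 1) * B.indicator 1 ω := by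
  by_cases h : ω ∈ B <;> simp [h]

variable [MeasurableSpace Ω] {μ : Measure Ω}

lemma integrable_exp_mul_indicator_one [IsFiniteMeasure μ] {B : Set Ω} (hB : MeasurableSet B)
    (t : ℝ) : Integrable (fun ω => exp (t * B.indicator 1 ω)) μ := by
  simp_rw [exp_mul_indicator_one]
  exact (integrable_const 1).add ((integrable_const 1).indicator hB |>.const_mul _)

lemma mgf_indicator_one [IsProbabilityMeasure μ] {B : Set Ω} (hB : MeasurableSet B) (t : ℝ) :
    mgf (B.indicator 1) μ t = 1 + (exp t - 1) * μ.real B := by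
  simp_rw [mgf, exp_mul_indicator_one]
  rw [integral_add (integrable_const 1) ((integrable_const 1).indicator hB |>.const_mul _),
    integral_const_mul, integral_indicator_one hB]
  simp

lemma measureReal_le_card_filter_mem_le {ι : Type*} [Fintype ι] {B : ι → Set Ω}
    [∀ ω, DecidablePred fun i => ω ∈ B i] (hB : ∀ i, MeasurableSet (B i))
    (hindep : iIndepSet B μ) {p : ℝ} (hp : ∀ i, μ.real (B i) ≤ p) (k : ℕ) :
    μ.real {ω | k ≤ #{i | ω ∈ B i}} ≤ (1 + p) ^ Fintype.card ι / 2 ^ k := by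
  have := hindep.isProbabilityMeasure
  set X : ι → Ω → ℝ := fun i => (B i).indicator 1
  have hX : iIndepFun X μ := hindep.iIndepFun_indicator
  have hXmeas : ∀ i, Measurable (X i) := fun i => measurable_one.indicator (hB i)
  have hcount : ∀ ω, (#{i | ω ∈ B i} : ℝ) = (∑ i, X i) ω := by
    intro ω
    simp [X, Finset.sum_apply, Set.indicator_apply]
  calc μ.real {ω | k ≤ #{i | ω ∈ B i}} = μ.real {ω | (k : ℝ) ≤ (∑ i, X i) ω} := by
        simp_rw [← hcount, Nat.cast_le]
    _ ≤ exp (-log 2 * k) * mgf (∑ i, X i) μ (log 2) :=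
        measure_ge_le_exp_mul_mgf _ (log_nonneg one_le_two)
          (hX.integrable_exp_mul_sum hXmeas fun i _ => integrable_exp_mul_indicator_one (hB i) _)
    _ = (∏ i, (1 + μ.real (B i))) / 2 ^ k := by
        rw [hX.mgf_sum hXmeas]
        simp only [X, mgf_indicator_one (hB _), exp_log two_pos]
        rw [neg_mul, exp_neg, mul_comm (log 2), ← log_pow, exp_log (by positivity)]
        norm_num [div_eq_inv_mul]
    _ ≤ (1 + p) ^ Fintype.card ι / 2 ^ k := by
        gcongr
        calc ∏ i, (1 + μ.real (B i)) ≤ ∏ _i : ι, (1 + p) :=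
              prod_le_prod (fun i _ => by positivity) fun i _ => by linarith [hp i]
          _ = (1 + p) ^ Fintype.card ι := by simp

end Chernoff

lemma four_thirds_pow_div_two_pow_le_exp {r k : ℕ} (h : r ≤ 2 * k) :
    (4 / 3 : ℝ) ^ r / 2 ^ k ≤ exp (-r / 18) := by
  refine (pow_le_pow_iff_left₀ (by positivity) (by positivity) two_ne_zero).1 ?_
  calc ((4 / 3 : ℝ) ^ r / 2 ^ k) ^ 2 = (16 / 9) ^ r / 2 ^ (2 * k) := by
        rw [div_pow, ← pow_mul, ← pow_mul, mul_comm r, pow_mul, mul_comm k]; norm_num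
    _ ≤ (16 / 9) ^ r / 2 ^ r := by gcongr; norm_num
    _ = (8 / 9) ^ r := by rw [← div_pow]; norm_num
    _ ≤ exp (-1 / 9) ^ r := by gcongr; linarith [add_one_le_exp (-1 / 9)]
    _ = exp (-r / 18) ^ 2 := by rw [← exp_nat_mul, ← exp_nat_mul]; ring_nf

theorem median_amplification_general {Ω : Type*} [MeasurableSpace Ω]
    (μ : Measure Ω) [IsProbabilityMeasure μ]
    (a t : ℝ) (r : ℕ) (hr : 0 < r)
    (Y : Fin r → Ω → ℝ) (hYmeas : ∀ j, Measurable (Y j))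
    (hYindep : iIndepFun Y μ)
    (hYtail : ∀ j, μ {ω | t < |Y j ω - a|} ≤ 1 / 3) :
    μ {ω | t < |sampleMedian hr (fun j => Y j ω) - a|}
      ≤ ENNReal.ofReal (Real.exp (-(r : ℝ) / 18)) := by
  set B : Fin r → Set Ω := fun j => {ω | t < |Y j ω - a|}
  have hA : MeasurableSet {x : ℝ | t < |x - a|} :=
    measurableSet_lt measurable_const (measurable_id.sub_const a).abs
  have hB : ∀ j, MeasurableSet (B j) := fun j => hYmeas j hA
  have hBindep : iIndepSet B μ :=
    (iIndepSet_iff_meas_biInter hB).2 fun s => hYindep.meas_biInter fun j _ => ⟨_, hA, rfl⟩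
  have hBtail : ∀ j, μ.real (B j) ≤ 1 / 3 := fun j => by
    simpa [Measure.real] using ENNReal.toReal_mono (by norm_num) (hYtail j)
  have hsub : {ω | t < |sampleMedian hr (fun j => Y j ω) - a|} ⊆
      {ω | (r + 1) / 2 ≤ #{j | ω ∈ B j}} :=
    fun ω hω => le_card_filter_of_lt_abs_sampleMedian_sub hr _ hω
  rw [← ofReal_measureReal]
  refine ENNReal.ofReal_le_ofReal ?_
  calc μ.real {ω | t < |sampleMedian hr (fun j => Y j ω) - a|}
      ≤ μ.real {ω | (r + 1) / 2 ≤ #{j | ω ∈ B j}} := measureReal_mono hsub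
    _ ≤ (1 + 1 / 3) ^ r / 2 ^ ((r + 1) / 2) := by
      simpa using measureReal_le_card_filter_mem_le hB hBindep hBtail ((r + 1) / 2)
    _ = (4 / 3) ^ r / 2 ^ ((r + 1) / 2) := by norm_num
    _ ≤ exp (-r / 18) := four_thirds_pow_div_two_pow_le_exp (by omega)

/-- Median amplification: if `Y₁,…,Y_r` are i.i.d. real random variables with
`P(|Y_j - a| > t) ≤ 1/3` for each `j`, then the sample median `M` satisfies
`P(|M - a| > t) ≤ exp (-r/18)`. -/
theorem median_amplification {Ω : Type*} [MeasurableSpace Ω]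
    (μ : Measure Ω) [IsProbabilityMeasure μ]
    (a t : ℝ) (ht : 0 < t) (r : ℕ) (hr : 0 < r)
    (Y : Fin r → Ω → ℝ) (hYmeas : ∀ j, Measurable (Y j))
    (hYindep : iIndepFun Y μ)
    (hYident : ∀ i j, IdentDistrib (Y i) (Y j) μ μ)
    (hYtail : ∀ j, μ {ω | t < |Y j ω - a|} ≤ 1 / 3) :
    μ {ω | t < |sampleMedian hr (fun j => Y j ω) - a|}
      ≤ ENNReal.ofReal (Real.exp (-(r : ℝ) / 18)) :=
  median_amplification_general μ a t r hr Y hYmeas hYindep hYtail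
end
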